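/- arXiv:1609.08612 — 2 statements merged into one kernel-verified Lean document; each statement's English description precedes it below -/
import Mathlib

section
/- For t ∈ [1, 2], the operator norm on ℓᵗ(Fin 2) of the matrix a = (1/2)·[[1+i, 1−i], [1−i, 1+i]] is at least 2^{1/t − 1/2}. -/
open scoped BigOperators

/-- The `ℓᵖ` norm on `ι → ℂ` for a real exponent `p`. -/
noncomputable def pNorm {ι : Type*} [Fintype ι] (p : ℝ) (ξ : ι → ℂ) : ℝ :=
  (∑ i, ‖ξ i‖ ^ p) ^ (1 / p)

/-- The operator norm of a matrix acting on `ℓᵖ(ι)`. -/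
noncomputable def opNormLp {ι : Type*} [Fintype ι] (p : ℝ) (M : Matrix ι ι ℂ) : ℝ :=
  sInf {c : ℝ | 0 ≤ c ∧ ∀ ξ : ι → ℂ, pNorm p (M.mulVec ξ) ≤ c * pNorm p ξ}

/-- The matrix `a = (1/2)·[[1+i, 1−i], [1−i, 1+i]]`. -/
noncomputable def aMat : Matrix (Fin 2) (Fin 2) ℂ :=
  (1 / 2 : ℂ) • !![1 + Complex.I, 1 - Complex.I; 1 - Complex.I, 1 + Complex.I]


open Matrix

section pNorm

variable {ι : Type*} [Fintype ι] {p : ℝ}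

lemma pNorm_nonneg (ξ : ι → ℂ) : 0 ≤ pNorm p ξ := by
  unfold pNorm
  positivity

lemma norm_le_pNorm (hp : 0 < p) (ξ : ι → ℂ) (j : ι) : ‖ξ j‖ ≤ pNorm p ξ := by
  have hj : ‖ξ j‖ ^ p ≤ ∑ i, ‖ξ i‖ ^ p :=
    Finset.single_le_sum (f := fun i => ‖ξ i‖ ^ p) (fun i _ => by positivity) (Finset.mem_univ j)
  calc ‖ξ j‖ = (‖ξ j‖ ^ p) ^ (1 / p) := by
        rw [← Real.rpow_mul (norm_nonneg _), mul_one_div_cancel hp.ne', Real.rpow_one]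
    _ ≤ pNorm p ξ := by unfold pNorm; gcongr

lemma rpow_one_div_card_mul_rpow (hp : p ≠ 0) {r : ℝ} (hr : 0 ≤ r) :
    ((Fintype.card ι : ℝ) * r ^ p) ^ (1 / p) = (Fintype.card ι : ℝ) ^ (1 / p) * r := by
  rw [Real.mul_rpow (by positivity) (by positivity), ← Real.rpow_mul hr,
    mul_one_div_cancel hp, Real.rpow_one]

lemma pNorm_le_of_forall_norm_le (hp : 0 < p) {ξ : ι → ℂ} {r : ℝ} (hr : 0 ≤ r)
    (hξ : ∀ i, ‖ξ i‖ ≤ r) : pNorm p ξ ≤ (Fintype.card ι : ℝ) ^ (1 / p) * r := by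
  have hsum : ∑ i, ‖ξ i‖ ^ p ≤ (Fintype.card ι : ℝ) * r ^ p := by
    simpa using Finset.sum_le_sum fun i (_ : i ∈ Finset.univ) =>
      Real.rpow_le_rpow (norm_nonneg _) (hξ i) hp.le
  rw [← rpow_one_div_card_mul_rpow hp.ne' hr]
  unfold pNorm
  gcongr

lemma pNorm_of_forall_norm_eq (hp : p ≠ 0) {ξ : ι → ℂ} {r : ℝ} (hr : 0 ≤ r)
    (hξ : ∀ i, ‖ξ i‖ = r) : pNorm p ξ = (Fintype.card ι : ℝ) ^ (1 / p) * r := by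
  simp only [pNorm, hξ, Finset.sum_const, Finset.card_univ, nsmul_eq_mul]
  exact rpow_one_div_card_mul_rpow hp hr

lemma pNorm_single_one [DecidableEq ι] (hp : p ≠ 0) (j : ι) :
    pNorm p (Pi.single j (1 : ℂ)) = 1 := by
  rw [pNorm, Finset.sum_eq_single j (fun i _ hij => by simp [hij, Real.zero_rpow hp])
    (by simp)]
  simp

end pNorm

section opNormLp

variable {ι : Type*} [Fintype ι] {p : ℝ}

lemma exists_pNorm_mulVec_le (hp : 0 < p) (M : Matrix ι ι ℂ) :
    ∃ c, 0 ≤ c ∧ ∀ ξ : ι → ℂ, pNorm p (M *ᵥ ξ) ≤ c * pNorm p ξ := by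
  set K := ∑ i, ∑ j, ‖M i j‖
  refine ⟨(Fintype.card ι : ℝ) ^ (1 / p) * K, by positivity, fun ξ => ?_⟩
  have hentry : ∀ i, ‖(M *ᵥ ξ) i‖ ≤ K * pNorm p ξ := fun i =>
    calc ‖(M *ᵥ ξ) i‖ ≤ ∑ j, ‖M i j‖ * ‖ξ j‖ := by
          simpa [mulVec, dotProduct] using norm_sum_le Finset.univ fun j => M i j * ξ j
      _ ≤ ∑ j, ‖M i j‖ * pNorm p ξ := by gcongr with j; exact norm_le_pNorm hp ξ j
      _ = (∑ j, ‖M i j‖) * pNorm p ξ := Finset.sum_mul .. |>.symm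
      _ ≤ K * pNorm p ξ := by
          gcongr
          · exact pNorm_nonneg ξ
          exact Finset.single_le_sum (f := fun i => ∑ j, ‖M i j‖)
            (fun i _ => by positivity) (Finset.mem_univ i)
  rw [mul_assoc]
  exact pNorm_le_of_forall_norm_le hp (mul_nonneg (by positivity) (pNorm_nonneg ξ)) hentry

/- Boundedness (`exists_pNorm_mulVec_le`) is what makes this work: otherwise the defining set
of `opNormLp` is empty and its `sInf` is the junk value `0`. -/
lemma pNorm_mulVec_le_opNormLp (hp : 0 < p) (M : Matrix ι ι ℂ) {ξ : ι → ℂ}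
    (hξ : pNorm p ξ = 1) : pNorm p (M *ᵥ ξ) ≤ opNormLp p M :=
  le_csInf (exists_pNorm_mulVec_le hp M) fun _ ⟨_, hc⟩ => by simpa [hξ] using hc ξ

end opNormLp

lemma norm_one_add_I_div_two : ‖(1 + Complex.I) / 2‖ = (Real.sqrt 2)⁻¹ := by
  rw [norm_div, Complex.norm_def, Complex.normSq_apply]
  field_simp
  norm_num [Real.sqrt_eq_iff_mul_self_eq_of_pos]

lemma norm_one_sub_I_div_two : ‖(1 - Complex.I) / 2‖ = (Real.sqrt 2)⁻¹ := by
  rw [norm_div, Complex.norm_def, Complex.normSq_apply]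
  field_simp
  norm_num [Real.sqrt_eq_iff_mul_self_eq_of_pos]

lemma aMat_mulVec_single_zero :
    aMat *ᵥ Pi.single 0 1 = ![(1 + Complex.I) / 2, (1 - Complex.I) / 2] := by
  ext i
  fin_cases i <;> simp [aMat, mulVec, dotProduct, Fin.sum_univ_two] <;> ring

lemma pNorm_aMat_mulVec_single_zero {p : ℝ} (hp : p ≠ 0) :
    pNorm p (aMat *ᵥ Pi.single 0 1) = (2 : ℝ) ^ (1 / p - 1 / 2) := by
  have hcol : ∀ i, ‖![(1 + Complex.I) / 2, (1 - Complex.I) / 2] i‖ = (Real.sqrt 2)⁻¹ := by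
    intro i
    fin_cases i
    exacts [norm_one_add_I_div_two, norm_one_sub_I_div_two]
  rw [aMat_mulVec_single_zero, pNorm_of_forall_norm_eq hp (by positivity) hcol,
    Real.rpow_sub two_pos, ← Real.sqrt_eq_rpow, Fintype.card_fin]
  norm_num [div_eq_mul_inv]

theorem stmt3_general (t : ℝ) (ht : 1 ≤ t) :
    (2 : ℝ) ^ (1 / t - 1 / 2) ≤ opNormLp t aMat := by
  have ht0 : 0 < t := by linarith
  rw [← pNorm_aMat_mulVec_single_zero ht0.ne']
  exact pNorm_mulVec_le_opNormLp ht0 aMat (pNorm_single_one ht0.ne' 0)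

/-- For `t ∈ [1, 2]`, the operator norm of `a` on `ℓᵗ(Fin 2)` is at least
`2 ^ (1/t − 1/2)`. -/
theorem stmt3 (t : ℝ) (ht : 1 ≤ t) (ht2 : t ≤ 2) :
    (2 : ℝ) ^ (1 / t - 1 / 2) ≤ opNormLp t aMat :=
  stmt3_general t ht
end

section
/- The operator norm on ℓ¹(Fin 2) of the matrix a = (1/2)·[[1+i, 1−i], [1−i, 1+i]] equals √2, and the operator norm on ℓ²(Fin 2) of a equals 1. -/
open scoped BigOperators

/-! On `ℓ¹` a matrix has operator norm equal to its largest column sum `∑ i, ‖M i j‖`, attained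
at a standard basis vector; every entry of `a` has modulus `√2 / 2`, so this is `√2`. On `ℓ²`
the matrix `a` is unitary, hence an isometry, so its operator norm is `1`. -/

open Matrix

section
variable {ι : Type*} [Fintype ι]

lemma pNorm_one (ξ : ι → ℂ) : pNorm 1 ξ = ∑ i, ‖ξ i‖ := by
  simp [pNorm]

lemma pNorm_two (ξ : ι → ℂ) : pNorm 2 ξ = ‖(WithLp.toLp 2 ξ : EuclideanSpace ℂ ι)‖ := by
  rw [EuclideanSpace.norm_eq, pNorm, Real.sqrt_eq_rpow]
  norm_num [Real.rpow_natCast]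

lemma opNormLp_eq_of_le_of_eq {p c : ℝ} {M : Matrix ι ι ℂ} (hc : 0 ≤ c)
    (hle : ∀ ξ, pNorm p (M *ᵥ ξ) ≤ c * pNorm p ξ) {ξ₀ : ι → ℂ} (hξ₀ : 0 < pNorm p ξ₀)
    (heq : pNorm p (M *ᵥ ξ₀) = c * pNorm p ξ₀) : opNormLp p M = c :=
  IsLeast.csInf_eq ⟨⟨hc, hle⟩, fun _ ⟨_, hd⟩ => le_of_mul_le_mul_right (heq ▸ hd ξ₀) hξ₀⟩

lemma pNorm_one_mulVec_le {M : Matrix ι ι ℂ} {c : ℝ} (hM : ∀ j, ∑ i, ‖M i j‖ ≤ c)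
    (ξ : ι → ℂ) : pNorm 1 (M *ᵥ ξ) ≤ c * pNorm 1 ξ := by
  simp only [pNorm_one, Finset.mul_sum]
  calc ∑ i, ‖(M *ᵥ ξ) i‖ ≤ ∑ i, ∑ j, ‖M i j‖ * ‖ξ j‖ := by
        gcongr with i
        exact (norm_sum_le _ _).trans_eq (by simp)
    _ = ∑ j, (∑ i, ‖M i j‖) * ‖ξ j‖ := by
        simp only [Finset.sum_mul]; exact Finset.sum_comm
    _ ≤ ∑ j, c * ‖ξ j‖ := by gcongr with j; exact hM j

variable [DecidableEq ι]

lemma pNorm_one_mulVec_single (M : Matrix ι ι ℂ) (j : ι) :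
    pNorm 1 (M *ᵥ Pi.single j 1) = ∑ i, ‖M i j‖ := by
  simp [pNorm_one]

lemma pNorm_one_single (j : ι) : pNorm 1 (Pi.single j (1 : ℂ)) = 1 := by
  simp [pNorm_one, Pi.single_apply, apply_ite]

lemma opNormLp_one_eq_of_isGreatest {M : Matrix ι ι ℂ} {c : ℝ}
    (h : IsGreatest (Set.range fun j => ∑ i, ‖M i j‖) c) : opNormLp 1 M = c := by
  obtain ⟨⟨j, hj : ∑ i, ‖M i j‖ = c⟩, hc⟩ := h
  refine opNormLp_eq_of_le_of_eq (hj ▸ by positivity)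
    (pNorm_one_mulVec_le fun j => hc ⟨j, rfl⟩) (ξ₀ := Pi.single j 1) ?_ ?_
  · simp [pNorm_one_single]
  · rw [pNorm_one_mulVec_single, pNorm_one_single, hj, mul_one]

lemma pNorm_two_mulVec_of_mem_unitaryGroup {M : Matrix ι ι ℂ} (hM : M ∈ unitaryGroup ι ℂ)
    (ξ : ι → ℂ) : pNorm 2 (M *ᵥ ξ) = pNorm 2 ξ := by
  rw [pNorm_two, pNorm_two, ← toEuclideanCLM_toLp]
  exact (toEuclideanCLM (n := ι) (𝕜 := ℂ) M).norm_map_of_mem_unitary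
    (Unitary.map_mem toEuclideanCLM hM) _

lemma opNormLp_two_of_mem_unitaryGroup [Nonempty ι] {M : Matrix ι ι ℂ}
    (hM : M ∈ unitaryGroup ι ℂ) : opNormLp 2 M = 1 := by
  obtain ⟨j⟩ := ‹Nonempty ι›
  refine opNormLp_eq_of_le_of_eq zero_le_one
    (fun ξ => (pNorm_two_mulVec_of_mem_unitaryGroup hM ξ).trans_le (one_mul _).ge)
    (ξ₀ := Pi.single j 1) ?_ (by rw [pNorm_two_mulVec_of_mem_unitaryGroup hM, one_mul])
  rw [pNorm_two]
  simp

end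

lemma aMat_mem_unitaryGroup : aMat ∈ unitaryGroup (Fin 2) ℂ := by
  rw [mem_unitaryGroup_iff', star_eq_conjTranspose]
  ext i j
  fin_cases i <;> fin_cases j <;>
    simp [aMat, mul_apply, Fin.sum_univ_two, Complex.ext_iff] <;> norm_num

lemma norm_aMat_apply (i j : Fin 2) : ‖aMat i j‖ = Real.sqrt 2 / 2 := by
  fin_cases i <;> fin_cases j <;>
    simp [aMat, Complex.norm_def, Complex.normSq_apply] <;> norm_num <;> ring

/-- The operator norm of `a` on `ℓ¹(Fin 2)` is `√2`, and its operator norm on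
`ℓ²(Fin 2)` is `1`. -/
theorem stmt4 : opNormLp 1 aMat = Real.sqrt 2 ∧ opNormLp 2 aMat = 1 := by
  refine ⟨opNormLp_one_eq_of_isGreatest ?_, opNormLp_two_of_mem_unitaryGroup aMat_mem_unitaryGroup⟩
  have colSum (j : Fin 2) : ∑ i, ‖aMat i j‖ = Real.sqrt 2 := by
    rw [Fin.sum_univ_two, norm_aMat_apply, norm_aMat_apply]; ring
  simp only [colSum, Set.range_const]
  exact isGreatest_singleton
end
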